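/- arXiv:1310.5773 — 4 statements merged into one kernel-verified Lean document; each statement's English description precedes it below -/
import Mathlib

section
/- If (A, B) is a periodic Golay pair of length v > 1, then v is even. -/
open Finset

/-- Zero-extension of a sequence indexed by `ZMod v` to all of `ℤ`,
with `a_i = 0` for `i` outside `[0, v-1]`. -/
def zext (v : ℕ) (A : ZMod v → ℤ) (n : ℤ) : ℤ :=
  if 0 ≤ n ∧ n < (v : ℤ) then A (n : ZMod v) else 0

/-- Nonperiodic autocorrelation function `NAF_A(s) = Σ_{i∈ℤ} a_i a_{i+s}`. -/
def naf (v : ℕ) (A : ZMod v → ℤ) (s : ℤ) : ℤ :=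
  ∑ i ∈ Finset.range v, zext v A i * zext v A (i + s)

/-- Periodic autocorrelation function `PAF_A(s) = Σ_{i∈Z_v} a_i a_{i+s}`. -/
def paf (v : ℕ) (A : ZMod v → ℤ) (s : ZMod v) : ℤ :=
  ∑ i ∈ Finset.range v, A i * A ((i : ZMod v) + s)

/-- Number of ordered pairs `(a,b)` with `a - b = c` and both `a,b` in `X`,
or both in `Y` (counted with multiplicity over the two blocks). -/
def sdsCount (v : ℕ) (X Y : Finset (ZMod v)) (c : ZMod v) : ℕ :=
  ((X ×ˢ X).filter fun p => p.1 - p.2 = c).card +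
  ((Y ×ˢ Y).filter fun p => p.1 - p.2 = c).card

/-!
Every periodic autocorrelation of a `±1` sequence of length `v` is `≡ v (mod 4)`: modulo 4,
`x y ≡ x + y - 1` for `x, y = ±1`, so `PAF_A(s) ≡ 2 Σ a_i - v`, and `2 a_i ≡ 2`.
Hence `0 = PAF_A(1) + PAF_B(1) ≡ 2v (mod 4)`, i.e. `v` is even.
-/

theorem ZMod.sum_range_natCast {M : Type*} [AddCommMonoid M] (v : ℕ) [NeZero v]
    (f : ZMod v → M) : ∑ i ∈ range v, f i = ∑ x : ZMod v, f x :=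
  sum_nbij' (↑) ZMod.val (fun _ _ => mem_univ _)
    (fun x _ => mem_range.mpr (ZMod.val_lt x))
    (fun _ hi => ZMod.val_natCast_of_lt (mem_range.mp hi))
    (fun x _ => ZMod.natCast_zmod_val x) (fun _ _ => rfl)

theorem paf_eq_sum_univ (v : ℕ) [NeZero v] (A : ZMod v → ℤ) (s : ZMod v) :
    paf v A s = ∑ x : ZMod v, A x * A (x + s) :=
  ZMod.sum_range_natCast v fun x => A x * A (x + s)

theorem sum_mul_add_modEq_card {G : Type*} [AddCommGroup G] [Fintype G] (f : G → ℤ)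
    (hf : ∀ x, f x = 1 ∨ f x = -1) (s : G) :
    ∑ x, f x * f (x + s) ≡ Fintype.card G [ZMOD 4] := by
  have hf4 : ∀ x, (f x : ZMod 4) = 1 ∨ (f x : ZMod 4) = -1 := fun x => by
    rcases hf x with h | h <;> simp [h]
  refine (ZMod.intCast_eq_intCast_iff _ _ 4).mp ?_
  push_cast
  calc ∑ x, (f x : ZMod 4) * f (x + s)
      = ∑ x, ((f x : ZMod 4) + f (x + s) - 1) := by
        refine sum_congr rfl fun x _ => ?_
        rcases hf4 x with h | h <;> rcases hf4 (x + s) with h' | h' <;> rw [h, h'] <;> decide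
    _ = ∑ x, (2 * (f x : ZMod 4) - 1) := by
        have hshift : ∑ x, (f (x + s) : ZMod 4) = ∑ x, (f x : ZMod 4) :=
          Fintype.sum_equiv (Equiv.addRight s) _ _ fun _ => rfl
        rw [sum_sub_distrib, sum_add_distrib, hshift, sum_sub_distrib, ← mul_sum, two_mul]
    _ = ∑ _x : G, (1 : ZMod 4) := by
        refine sum_congr rfl fun x _ => ?_
        rcases hf4 x with h | h <;> rw [h] <;> decide
    _ = Fintype.card G := by simp

theorem paf_modEq_length (v : ℕ) [NeZero v] (A : ZMod v → ℤ) (hA : ∀ i, A i = 1 ∨ A i = -1)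
    (s : ZMod v) : paf v A s ≡ v [ZMOD 4] := by
  rw [paf_eq_sum_univ]
  simpa using sum_mul_add_modEq_card A hA s

theorem periodic_golay_length_even (v : ℕ) (hv : 1 < v)
    (A B : ZMod v → ℤ)
    (hA : ∀ i, A i = 1 ∨ A i = -1) (hB : ∀ i, B i = 1 ∨ B i = -1)
    (hP : ∀ s : ZMod v, s ≠ 0 → paf v A s + paf v B s = 0) :
    Even v := by
  have : NeZero v := ⟨by omega⟩
  have : Fact (1 < v) := ⟨hv⟩
  have hsum := (paf_modEq_length v A hA 1).add (paf_modEq_length v B hB 1)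
  rw [hP 1 one_ne_zero] at hsum
  have hdvd : (4 : ℤ) ∣ v + v - 0 := hsum.dvd
  rw [Nat.even_iff]
  omega
end

section
/- If (A, B) is a periodic Golay pair of length v, and r = |{i : a_i = -1}|, s = |{i : b_i = -1}|, then (v - 2r)^2 + (v - 2s)^2 = 2v. In particular, v is a sum of two squares. -/
/-!
Summing the autocorrelation of a sequence over all shifts gives the square of its sum, and the
sum of a `±1` sequence of length `v` with `r` entries equal to `-1` is `v - 2r`. For a periodic
Golay pair, the autocorrelations of `A` and `B` cancel at every nonzero shift, so the total over
all shifts is `PAF_A(0) + PAF_B(0) = 2v`.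
-/

open Finset

theorem sum_range_natCast_eq_sum_zmod {M : Type*} [AddCommMonoid M] (v : ℕ) [NeZero v]
    (f : ZMod v → M) : ∑ i ∈ range v, f i = ∑ i : ZMod v, f i :=
  sum_nbij' (fun i => (i : ZMod v)) ZMod.val (fun _ _ => mem_univ _)
    (fun a _ => mem_range.mpr (ZMod.val_lt a))
    (fun _ hi => ZMod.val_natCast_of_lt (mem_range.mp hi))
    (fun a _ => ZMod.natCast_zmod_val a) (fun _ _ => rfl)

theorem sum_eq_card_sub_two_mul_card_filter_eq_neg_one {α : Type*} [Fintype α] (C : α → ℤ)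
    (hC : ∀ i, C i = 1 ∨ C i = -1) :
    ∑ i, C i = Fintype.card α - 2 * #{i | C i = -1} := calc
  ∑ i, C i = ∑ i, (1 - 2 * if C i = -1 then 1 else 0) :=
    sum_congr rfl fun i _ => by rcases hC i with h | h <;> simp [h]
  _ = Fintype.card α - 2 * #{i | C i = -1} := by
    simp only [sum_sub_distrib, ← mul_sum, sum_boole, sum_const, card_univ, nsmul_eq_mul,
      mul_one]

section paf

variable {v : ℕ} [NeZero v]

theorem paf_eq_sum (C : ZMod v → ℤ) (t : ZMod v) :
    paf v C t = ∑ i : ZMod v, C i * C (i + t) :=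
  sum_range_natCast_eq_sum_zmod v fun i => C i * C (i + t)

theorem paf_zero_of_pm_one (C : ZMod v → ℤ) (hC : ∀ i, C i = 1 ∨ C i = -1) :
    paf v C 0 = v := by
  have hsq : ∀ i, C i * C i = 1 := fun i => by rcases hC i with h | h <;> simp [h]
  simp [paf_eq_sum, hsq]

theorem sum_paf_eq_sq_sum (C : ZMod v → ℤ) :
    ∑ t, paf v C t = (∑ i, C i) ^ 2 := calc
  ∑ t, paf v C t = ∑ i, ∑ t, C i * C (i + t) := by simp only [paf_eq_sum]; exact sum_comm
  _ = ∑ i, C i * ∑ j, C j := by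
    refine sum_congr rfl fun i _ => ?_
    rw [← mul_sum]
    exact congrArg _ (Fintype.sum_equiv (Equiv.addLeft i) _ _ fun _ => rfl)
  _ = (∑ i, C i) ^ 2 := by rw [← sum_mul, sq]

end paf

theorem periodic_golay_sum_two_squares (v : ℕ) [NeZero v]
    (A B : ZMod v → ℤ)
    (hA : ∀ i, A i = 1 ∨ A i = -1) (hB : ∀ i, B i = 1 ∨ B i = -1)
    (hP : ∀ s : ZMod v, s ≠ 0 → paf v A s + paf v B s = 0)
    (r s : ℕ)
    (hr : r = (Finset.univ.filter fun i : ZMod v => A i = -1).card)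
    (hs : s = (Finset.univ.filter fun i : ZMod v => B i = -1).card) :
    ((v : ℤ) - 2 * r) ^ 2 + ((v : ℤ) - 2 * s) ^ 2 = 2 * v := by
  have htotal : ∑ t : ZMod v, (paf v A t + paf v B t) = 2 * v := by
    rw [sum_eq_single_of_mem 0 (mem_univ _) fun t _ ht => hP t ht, paf_zero_of_pm_one A hA,
      paf_zero_of_pm_one B hB, two_mul]
  rwa [sum_add_distrib, sum_paf_eq_sq_sum, sum_paf_eq_sq_sum,
    sum_eq_card_sub_two_mul_card_filter_eq_neg_one A hA,
    sum_eq_card_sub_two_mul_card_filter_eq_neg_one B hB, ZMod.card, ← hr, ← hs] at htotal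
end

section
/- There exists a periodic Golay pair of length 74, hence 74 is a periodic Golay number. -/
open Finset

/-!
With `A = 1 - 2·𝟙_X`, expanding `PAF_A(s) = ∑ᵢ A i * A (i + s)` gives
`PAF_A(s) = v - 4|X| + 4 λ_X(s)`, where `λ_X(s)` counts the pairs of `X` with difference `s`.
Hence the sign sequences of `X` and `Y` form a periodic Golay pair exactly when
`2 (λ_X(s) + λ_Y(s)) + v = 2 (|X| + |Y|)` for all `s ≠ 0`, i.e. when `{X, Y}` is a
`2-{v; |X|, |Y|; λ}` supplementary difference set with `λ = |X| + |Y| - v/2`.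
For `v = 74` the blocks `H·J` and `H·K` form a `2-{74; 36, 31; 30}` SDS, which is a finite check.
-/

open Pointwise

section SignSequence

variable {G : Type*} [DecidableEq G]

def signSeq (X : Finset G) (g : G) : ℤ := if g ∈ X then -1 else 1

theorem signSeq_eq_one_or_neg_one (X : Finset G) (g : G) :
    signSeq X g = 1 ∨ signSeq X g = -1 := by
  unfold signSeq; split_ifs <;> simp

theorem card_filter_sub_eq_card_filter_add_mem [AddCommGroup G] (X : Finset G) (s : G) :
    #{p ∈ X ×ˢ X | p.1 - p.2 = s} = #{x ∈ X | x + s ∈ X} := by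
  refine card_bij' (fun p _ => p.2) (fun x _ => (x + s, x)) ?_ ?_ ?_ ?_
  · rintro ⟨_, b⟩ hp
    obtain ⟨⟨ha, hb⟩, rfl⟩ : (_ ∈ X ∧ b ∈ X) ∧ _ = b + s := by
      simpa [sub_eq_iff_eq_add'] using hp
    simpa using ⟨hb, ha⟩
  all_goals simp +contextual [sub_eq_iff_eq_add']

theorem sum_signSeq_mul_signSeq_add [AddCommGroup G] [Fintype G] (X : Finset G) (s : G) :
    ∑ g, signSeq X g * signSeq X (g + s) =
      Fintype.card G - 4 * #X + 4 * #{p ∈ X ×ˢ X | p.1 - p.2 = s} := by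
  have expand : ∀ g, signSeq X g * signSeq X (g + s) =
      1 - 2 * (if g ∈ X then 1 else 0) - 2 * (if g + s ∈ X then 1 else 0) +
        4 * (if g ∈ X ∧ g + s ∈ X then 1 else 0) := by
    intro g; unfold signSeq; split_ifs <;> simp_all
  have shift :
      ∑ g : G, (if g + s ∈ X then (1 : ℤ) else 0) = ∑ g : G, if g ∈ X then 1 else 0 :=
    Fintype.sum_equiv (Equiv.addRight s) _ _ fun _ => rfl
  simp only [expand, sum_add_distrib, sum_sub_distrib, ← mul_sum, shift, sum_boole,
    filter_and, filter_mem_eq_inter, inter_filter, inter_univ,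
    card_filter_sub_eq_card_filter_add_mem]
  simp
  ring

end SignSequence

section PeriodicAutocorrelation

variable {v : ℕ} [NeZero v]

theorem sum_range_natCast_eq_sum {M : Type*} [AddCommMonoid M] (f : ZMod v → M) :
    ∑ i ∈ range v, f i = ∑ x, f x :=
  sum_nbij' (↑) ZMod.val (by simp) (fun x _ => by simpa using ZMod.val_lt x)
    (fun _ hi => ZMod.val_cast_of_lt (mem_range.1 hi)) (fun x _ => ZMod.natCast_zmod_val x)
    (by simp)

theorem paf_signSeq (X : Finset (ZMod v)) (s : ZMod v) :
    paf v (signSeq X) s = v - 4 * #X + 4 * #{p ∈ X ×ˢ X | p.1 - p.2 = s} := by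
  rw [paf, sum_range_natCast_eq_sum (fun x => signSeq X x * signSeq X (x + s)),
    sum_signSeq_mul_signSeq_add, ZMod.card]

theorem paf_add_paf_signSeq (X Y : Finset (ZMod v)) (s : ZMod v) :
    paf v (signSeq X) s + paf v (signSeq Y) s =
      2 * v - 4 * (#X + #Y) + 4 * sdsCount v X Y s := by
  rw [paf_signSeq, paf_signSeq, sdsCount]
  push_cast
  ring

theorem exists_periodic_golay_pair_of_sdsCount (X Y : Finset (ZMod v))
    (hXY : ∀ s ≠ 0, 2 * sdsCount v X Y s + v = 2 * (#X + #Y)) :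
    ∃ A B : ZMod v → ℤ,
      (∀ i, A i = 1 ∨ A i = -1) ∧ (∀ i, B i = 1 ∨ B i = -1) ∧
      ∀ s : ZMod v, s ≠ 0 → paf v A s + paf v B s = 0 := by
  refine ⟨signSeq X, signSeq Y, signSeq_eq_one_or_neg_one X, signSeq_eq_one_or_neg_one Y,
    fun s hs => ?_⟩
  have h : (2 * sdsCount v X Y s + v : ℤ) = 2 * (#X + #Y) := mod_cast hXY s hs
  rw [paf_add_paf_signSeq]
  linear_combination 2 * h

end PeriodicAutocorrelation

def golayMultipliers : Finset (ZMod 74) := {1, 47, 63}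

def golayBlockX : Finset (ZMod 74) := golayMultipliers * {1, 4, 6, 7, 9, 12, 22, 23, 28, 29, 34, 42}

def golayBlockY : Finset (ZMod 74) := golayMultipliers * {1, 2, 4, 6, 9, 12, 17, 21, 22, 37, 55}

theorem card_golayBlockX : #golayBlockX = 36 := by decide +kernel

theorem card_golayBlockY : #golayBlockY = 31 := by decide +kernel

theorem sdsCount_golayBlocks :
    ∀ s : ZMod 74, s ≠ 0 → sdsCount 74 golayBlockX golayBlockY s = 30 := by
  decide +kernel

theorem periodic_golay_pair_length_74 :
    ∃ A B : ZMod 74 → ℤ,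
      (∀ i, A i = 1 ∨ A i = -1) ∧ (∀ i, B i = 1 ∨ B i = -1) ∧
      ∀ s : ZMod 74, s ≠ 0 → paf 74 A s + paf 74 B s = 0 :=
  exists_periodic_golay_pair_of_sdsCount golayBlockX golayBlockY fun s hs => by
    rw [sdsCount_golayBlocks s hs, card_golayBlockX, card_golayBlockY]
end

section
/- If (A, B) is a Golay pair of length g and (C, D) is a periodic Golay pair of length d, then there exists a periodic Golay pair of length gd. In particular, the product of a Golay number and a periodic Golay number is a periodic Golay number. -/
open Finset

/-!
Work in the group ring `ℤ[ℤ/gd]`, writing `X(x) = ∑ Xᵢ xⁱ` for the Hall polynomial of a sequence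
and `X*` for its image under `x ↦ x⁻¹`, so that the periodic autocorrelations of `X` are the
coefficients of `X X*`. The Golay pair gives `A A* + B B* = 2g` already in `ℤ[ℤ]`, hence in
`ℤ[ℤ/gd]`. The periodic pair gives `P P* + Q Q* = d` in `ℤ[ℤ/d]` for the `{0, ±1}`-sequences
`P = (C + D)/2` and `Q = (C - D)/2`, and `x ↦ xᵍ` carries this into `ℤ[ℤ/gd]`. Turyn's sequences
`E = A P(xᵍ) + xᵍ⁻¹ B* Q(xᵍ)` and `F = B P(xᵍ) - xᵍ⁻¹ A* Q(xᵍ)` then satisfy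
`E E* + F F* = (A A* + B B*)(P P* + Q Q*) = 2gd`, and since exactly one of `P j`, `Q j` is
nonzero, their coefficients are `±1`.
-/

open AddMonoidAlgebra

section GroupRing

variable {R G H : Type*} [Semiring R] [AddCommGroup G] [AddCommGroup H]

variable (R G) in
noncomputable def negDomain : R[G] →+* R[G] :=
  mapDomainRingHom R negAddMonoidHom

@[simp]
lemma negDomain_single (g : G) (r : R) : negDomain R G (single g r) = single (-g) r := by
  simp [negDomain, mapDomainRingHom_apply, mapDomain_single]

lemma negDomain_negDomain (x : R[G]) : negDomain R G (negDomain R G x) = x := by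
  have : (negAddMonoidHom : G →+ G).comp negAddMonoidHom = .id G := by ext; simp
  rw [negDomain, ← RingHom.comp_apply, ← mapDomainRingHom_comp, this, mapDomainRingHom_id,
    RingHom.id_apply]

lemma mapDomainRingHom_negDomain (f : G →+ H) (x : R[G]) :
    mapDomainRingHom R f (negDomain R G x) = negDomain R H (mapDomainRingHom R f x) := by
  have : f.comp negAddMonoidHom = (negAddMonoidHom : H →+ H).comp f := by ext; simp
  rw [negDomain, negDomain, ← RingHom.comp_apply, ← RingHom.comp_apply, ← mapDomainRingHom_comp,
    ← mapDomainRingHom_comp, this]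

lemma single_mul_negDomain_single (g : G) : single g (1 : R) * negDomain R G (single g 1) = 1 := by
  simp [single_mul_single, one_def]

lemma eq_natCast_of_coeff {x : R[G]} {n : ℕ} (h0 : x.coeff 0 = n) (h : ∀ t ≠ 0, x.coeff t = 0) :
    x = n := by
  ext t
  obtain rfl | ht := eq_or_ne t 0
  · simp [h0]
  · simp [h t ht, ht.symm]

end GroupRing

lemma turyn_identity {R : Type*} [CommRing R] (σ : R →+* R) (hσ : ∀ x, σ (σ x) = x)
    {u : R} (hu : u * σ u = 1) (α β p q : R) :
    (α * p + u * σ β * q) * σ (α * p + u * σ β * q)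
      + (β * p - u * σ α * q) * σ (β * p - u * σ α * q)
      = (α * σ α + β * σ β) * (p * σ p + q * σ q) := by
  simp only [map_add, map_sub, map_mul, hσ]
  linear_combination (β * σ β * q * σ q + α * σ α * q * σ q) * hu

section SeqPoly

variable {G H : Type*}

/-- The Hall polynomial `∑ aᵢ xⁱ` of a sequence of length `v`, evaluated at `x = single a 1`. -/
noncomputable def seqPoly [AddMonoid G] (a : G) (v : ℕ) (A : ZMod v → ℤ) : ℤ[G] :=
  ∑ i ∈ range v, single (i • a) (A i)

section AddMonoid

variable [AddMonoid G] (a : G) {v : ℕ}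

lemma seqPoly_add (A B : ZMod v → ℤ) : seqPoly a v (A + B) = seqPoly a v A + seqPoly a v B := by
  simp [seqPoly, single_add, sum_add_distrib]

lemma seqPoly_neg (A : ZMod v → ℤ) : seqPoly a v (-A) = -seqPoly a v A := by
  simp [seqPoly, single_neg]

lemma mapDomainRingHom_seqPoly [AddMonoid H] (f : G →+ H) (A : ZMod v → ℤ) :
    mapDomainRingHom ℤ f (seqPoly a v A) = seqPoly (f a) v A := by
  simp [seqPoly, map_sum, mapDomainRingHom_apply, mapDomain_single]

end AddMonoid

lemma seqPoly_mul_seqPoly [AddCommMonoid G] (a : G) {g d : ℕ} (A : ZMod g → ℤ) (P : ZMod d → ℤ) :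
    seqPoly a g A * seqPoly (g • a) d P
      = seqPoly a (g * d) (fun k => A (k.val % g) * P (k.val / g)) := by
  rw [seqPoly, seqPoly, seqPoly, sum_mul_sum, ← sum_product']
  refine sum_nbij' (fun p => p.1 + g * p.2) (fun k => (k % g, k / g)) ?_ ?_ ?_ ?_ ?_
  · rintro ⟨i, j⟩ hij
    simp only [mem_product, mem_range] at hij ⊢
    nlinarith
  · intro k hk
    simp only [mem_product, mem_range] at hk ⊢
    have hg : 0 < g := Nat.pos_of_ne_zero (by rintro rfl; simp at hk)
    exact ⟨Nat.mod_lt k hg, (Nat.div_lt_iff_lt_mul hg).mpr (by linarith)⟩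
  · rintro ⟨i, j⟩ hij
    simp only [mem_product, mem_range] at hij
    simp [Nat.add_mul_mod_self_left, Nat.mod_eq_of_lt hij.1,
      Nat.add_mul_div_left _ _ (by omega : 0 < g), Nat.div_eq_of_lt hij.1]
  · intro k _
    exact Nat.mod_add_div k g
  · rintro ⟨i, j⟩ hij
    simp only [mem_product, mem_range] at hij
    have hlt : i + g * j < g * d := by nlinarith
    rw [single_mul_single, ZMod.val_cast_of_lt hlt, Nat.add_mul_mod_self_left,
      Nat.mod_eq_of_lt hij.1, Nat.add_mul_div_left _ _ (by omega), Nat.div_eq_of_lt hij.1, zero_add,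
      ← mul_nsmul, add_nsmul, mul_comm g j]

lemma single_mul_negDomain_seqPoly [AddCommGroup G] (a : G) {v : ℕ} (B : ZMod v → ℤ) :
    single ((v - 1) • a) 1 * negDomain ℤ G (seqPoly a v B) = seqPoly a v (fun i => B (-1 - i)) := by
  rw [seqPoly, seqPoly, map_sum, mul_sum, ← sum_range_reflect]
  refine sum_congr rfl fun i hi => ?_
  have hi : i < v := mem_range.mp hi
  rw [negDomain_single, single_mul_single, one_mul]
  have hv : v - 1 = (v - 1 - i) + i := by omega
  congr 1
  · rw [hv, add_nsmul, Nat.add_sub_cancel]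
    abel
  · congr 1
    rw [Nat.cast_sub (by omega), Nat.cast_sub (by omega), ZMod.natCast_self]
    ring

lemma coeff_seqPoly_int {v : ℕ} (A : ZMod v → ℤ) (n : ℤ) :
    (seqPoly (1 : ℤ) v A).coeff n = zext v A n := by
  simp only [seqPoly, coeff_sum, Finsupp.finsetSum_apply, coeff_single, Finsupp.single_apply,
    nsmul_eq_mul, mul_one, zext]
  split_ifs with h
  · lift n to ℕ using h.1
    simp only [Nat.cast_inj, sum_ite_eq', mem_range, Int.cast_natCast]
    exact if_pos (by exact_mod_cast h.2)
  · refine sum_eq_zero fun i hi => if_neg ?_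
    have := mem_range.mp hi
    omega

lemma coeff_seqPoly_zmod {v : ℕ} [NeZero v] (A : ZMod v → ℤ) (k : ZMod v) :
    (seqPoly (1 : ZMod v) v A).coeff k = A k := by
  simp only [seqPoly, coeff_sum, Finsupp.finsetSum_apply, coeff_single, Finsupp.single_apply,
    nsmul_eq_mul, mul_one]
  rw [sum_eq_single_of_mem k.val (mem_range.mpr k.val_lt), if_pos (ZMod.natCast_zmod_val k),
    ZMod.natCast_zmod_val]
  intro i hi hik
  refine if_neg fun h => hik ?_
  rw [← h, ZMod.val_cast_of_lt (mem_range.mp hi)]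

lemma coeff_mul_negDomain_seqPoly [AddCommGroup G] (x : ℤ[G]) (a : G) {v : ℕ} (A : ZMod v → ℤ)
    (t : G) :
    (x * negDomain ℤ G (seqPoly a v A)).coeff t = ∑ j ∈ range v, x.coeff (t + j • a) * A j := by
  simp [seqPoly, map_sum, mul_sum, coeff_sum, coeff_mul_single_apply]

lemma mapDomainRingHom_seqPoly_pair_identity [AddCommGroup G] [AddCommGroup H] (f : G →+ H)
    {a : G} {v n : ℕ} {A B : ZMod v → ℤ}
    (h : seqPoly a v A * negDomain ℤ G (seqPoly a v A)
      + seqPoly a v B * negDomain ℤ G (seqPoly a v B) = n) :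
    seqPoly (f a) v A * negDomain ℤ H (seqPoly (f a) v A)
      + seqPoly (f a) v B * negDomain ℤ H (seqPoly (f a) v B) = n := by
  simpa only [map_add, map_mul, mapDomainRingHom_negDomain, mapDomainRingHom_seqPoly, map_natCast]
    using congrArg (mapDomainRingHom ℤ f) h

end SeqPoly

section Correlation

variable {v : ℕ}

lemma zext_natCast_of_lt (A : ZMod v → ℤ) {i : ℕ} (hi : i < v) : zext v A i = A i := by
  rw [zext, if_pos ⟨by positivity, by exact_mod_cast hi⟩, Int.cast_natCast]

lemma naf_eq_coeff (A : ZMod v → ℤ) (s : ℤ) :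
    naf v A s = (seqPoly 1 v A * negDomain ℤ ℤ (seqPoly 1 v A)).coeff s := by
  rw [coeff_mul_negDomain_seqPoly, naf]
  refine sum_congr rfl fun i hi => ?_
  rw [coeff_seqPoly_int, zext_natCast_of_lt A (mem_range.mp hi), nsmul_one, add_comm, mul_comm]

lemma paf_eq_coeff (A : ZMod v → ℤ) (s : ZMod v) :
    paf v A s = (seqPoly 1 v A * negDomain ℤ (ZMod v) (seqPoly 1 v A)).coeff s := by
  obtain rfl | hv := v.eq_zero_or_pos
  · simp [paf, seqPoly]
  have : NeZero v := ⟨hv.ne'⟩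
  rw [coeff_mul_negDomain_seqPoly, paf]
  refine sum_congr rfl fun i _ => ?_
  rw [coeff_seqPoly_zmod, nsmul_one, add_comm, mul_comm]

lemma sum_range_mul_self_of_sign {A : ZMod v → ℤ} (hA : ∀ i, A i = 1 ∨ A i = -1) :
    ∑ i ∈ range v, A i * A i = v := by
  have h1 : ∀ i ∈ range v, A i * A i = 1 := fun i _ => by rcases hA i with h | h <;> simp [h]
  simp [sum_congr rfl h1]

lemma naf_zero {A : ZMod v → ℤ} (hA : ∀ i, A i = 1 ∨ A i = -1) : naf v A 0 = v := by
  rw [naf, ← sum_range_mul_self_of_sign hA]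
  refine sum_congr rfl fun i hi => ?_
  rw [add_zero, zext_natCast_of_lt A (mem_range.mp hi)]

lemma paf_zero {A : ZMod v → ℤ} (hA : ∀ i, A i = 1 ∨ A i = -1) : paf v A 0 = v := by
  simpa only [paf, add_zero] using sum_range_mul_self_of_sign hA

end Correlation

section Halves

variable {a b c e c' e' : ℤ}

lemma two_mul_halves_mul_add_halves_mul (hc : c = 1 ∨ c = -1) (he : e = 1 ∨ e = -1)
    (hc' : c' = 1 ∨ c' = -1) (he' : e' = 1 ∨ e' = -1) :
    2 * ((c + e) / 2 * ((c' + e') / 2) + (c - e) / 2 * ((c' - e') / 2)) = c * c' + e * e' := by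
  rcases hc with rfl | rfl <;> rcases he with rfl | rfl <;> rcases hc' with rfl | rfl <;>
    rcases he' with rfl | rfl <;> norm_num

lemma mul_half_add_mul_half_eq_sign (ha : a = 1 ∨ a = -1) (hb : b = 1 ∨ b = -1)
    (hc : c = 1 ∨ c = -1) (he : e = 1 ∨ e = -1) :
    a * ((c + e) / 2) + b * ((c - e) / 2) = 1 ∨ a * ((c + e) / 2) + b * ((c - e) / 2) = -1 := by
  rcases hc with rfl | rfl <;> rcases he with rfl | rfl <;> rcases ha with rfl | rfl <;>
    rcases hb with rfl | rfl <;> norm_num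

end Halves

section Turyn

variable {g d : ℕ}

lemma seqPoly_golay_identity {A B : ZMod g → ℤ} (hA : ∀ i, A i = 1 ∨ A i = -1)
    (hB : ∀ i, B i = 1 ∨ B i = -1) (hGolay : ∀ s : ℤ, s ≠ 0 → naf g A s + naf g B s = 0) :
    seqPoly 1 g A * negDomain ℤ ℤ (seqPoly 1 g A) + seqPoly 1 g B * negDomain ℤ ℤ (seqPoly 1 g B)
      = ((2 * g : ℕ) : ℤ[ℤ]) := by
  refine eq_natCast_of_coeff ?_ fun t ht => ?_ <;>
    rw [coeff_add, Finsupp.add_apply, ← naf_eq_coeff, ← naf_eq_coeff]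
  · rw [naf_zero hA, naf_zero hB]
    push_cast
    ring
  · exact hGolay t ht

lemma two_mul_paf_halves {C D : ZMod d → ℤ} (hC : ∀ i, C i = 1 ∨ C i = -1)
    (hD : ∀ i, D i = 1 ∨ D i = -1) (s : ZMod d) :
    2 * (paf d (fun j => (C j + D j) / 2) s + paf d (fun j => (C j - D j) / 2) s)
      = paf d C s + paf d D s := by
  simp only [paf, ← sum_add_distrib, mul_sum]
  exact sum_congr rfl fun i _ => two_mul_halves_mul_add_halves_mul (hC _) (hD _) (hC _) (hD _)

lemma seqPoly_halves_identity {C D : ZMod d → ℤ} (hC : ∀ i, C i = 1 ∨ C i = -1)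
    (hD : ∀ i, D i = 1 ∨ D i = -1)
    (hPeriodic : ∀ s : ZMod d, s ≠ 0 → paf d C s + paf d D s = 0) :
    seqPoly (1 : ZMod d) d (fun j => (C j + D j) / 2)
        * negDomain ℤ _ (seqPoly 1 d (fun j => (C j + D j) / 2))
      + seqPoly 1 d (fun j => (C j - D j) / 2)
        * negDomain ℤ _ (seqPoly 1 d (fun j => (C j - D j) / 2))
      = (d : ℤ[ZMod d]) := by
  refine eq_natCast_of_coeff ?_ fun t ht => ?_ <;>
    rw [coeff_add, Finsupp.add_apply, ← paf_eq_coeff, ← paf_eq_coeff]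
  · have := two_mul_paf_halves hC hD 0
    rw [paf_zero hC, paf_zero hD] at this
    omega
  · have := two_mul_paf_halves hC hD t
    rw [hPeriodic t ht] at this
    omega

variable (g d) in
noncomputable def zmodScaleHom : ZMod d →+ ZMod (g * d) :=
  ZMod.lift d ⟨zmultiplesHom _ (g • 1), by
    simp [← Nat.cast_mul, mul_comm d g]⟩

lemma zmodScaleHom_one : zmodScaleHom g d 1 = g • (1 : ZMod (g * d)) := by
  conv_lhs => rw [← Int.cast_one]
  rw [zmodScaleHom, ZMod.lift_coe]
  simp

/-- The sequence of length `gd` whose Hall polynomial is `A(x) P(xᵍ) + xᵍ⁻¹ B(x⁻¹) Q(xᵍ)`. -/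
def turynSeq (A B : ZMod g → ℤ) (P Q : ZMod d → ℤ) (k : ZMod (g * d)) : ℤ :=
  A (k.val % g) * P (k.val / g) + B (-1 - (k.val % g : ℕ)) * Q (k.val / g)

lemma seqPoly_turynSeq (A B : ZMod g → ℤ) (P Q : ZMod d → ℤ) :
    seqPoly 1 (g * d) (turynSeq A B P Q)
      = seqPoly (1 : ZMod (g * d)) g A * seqPoly (g • 1) d P
        + single ((g - 1) • 1) 1 * negDomain ℤ _ (seqPoly 1 g B) * seqPoly (g • 1) d Q := by
  rw [single_mul_negDomain_seqPoly, seqPoly_mul_seqPoly, seqPoly_mul_seqPoly, ← seqPoly_add]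
  rfl

lemma seqPoly_turynSeq_identity (A B : ZMod g → ℤ) (P Q : ZMod d → ℤ) :
    seqPoly 1 (g * d) (turynSeq A B P Q) * negDomain ℤ _ (seqPoly 1 (g * d) (turynSeq A B P Q))
      + seqPoly 1 (g * d) (turynSeq B (-A) P Q)
        * negDomain ℤ _ (seqPoly 1 (g * d) (turynSeq B (-A) P Q))
      = (seqPoly (1 : ZMod (g * d)) g A * negDomain ℤ _ (seqPoly 1 g A)
          + seqPoly 1 g B * negDomain ℤ _ (seqPoly 1 g B))
        * (seqPoly (g • 1) d P * negDomain ℤ _ (seqPoly (g • 1) d P)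
          + seqPoly (g • 1) d Q * negDomain ℤ _ (seqPoly (g • 1) d Q)) := by
  have hF : seqPoly 1 (g * d) (turynSeq B (-A) P Q)
      = seqPoly (1 : ZMod (g * d)) g B * seqPoly (g • 1) d P
        - single ((g - 1) • 1) 1 * negDomain ℤ _ (seqPoly 1 g A) * seqPoly (g • 1) d Q := by
    rw [seqPoly_turynSeq, seqPoly_neg, map_neg]
    ring
  rw [seqPoly_turynSeq, hF,
    turyn_identity _ negDomain_negDomain (single_mul_negDomain_single ((g - 1) • 1))]

lemma turynSeq_sign {A B : ZMod g → ℤ} {C D : ZMod d → ℤ} (hA : ∀ i, A i = 1 ∨ A i = -1)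
    (hB : ∀ i, B i = 1 ∨ B i = -1) (hC : ∀ i, C i = 1 ∨ C i = -1) (hD : ∀ i, D i = 1 ∨ D i = -1)
    (k : ZMod (g * d)) :
    turynSeq A B (fun j => (C j + D j) / 2) (fun j => (C j - D j) / 2) k = 1
      ∨ turynSeq A B (fun j => (C j + D j) / 2) (fun j => (C j - D j) / 2) k = -1 :=
  mul_half_add_mul_half_eq_sign (hA _) (hB _) (hC _) (hD _)

end Turyn

theorem golay_mul_periodic_golay_general (g d : ℕ)
    (A B : ZMod g → ℤ) (C D : ZMod d → ℤ)
    (hA : ∀ i, A i = 1 ∨ A i = -1) (hB : ∀ i, B i = 1 ∨ B i = -1)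
    (hC : ∀ i, C i = 1 ∨ C i = -1) (hD : ∀ i, D i = 1 ∨ D i = -1)
    (hGolay : ∀ s : ℤ, s ≠ 0 → naf g A s + naf g B s = 0)
    (hPeriodic : ∀ s : ZMod d, s ≠ 0 → paf d C s + paf d D s = 0) :
    ∃ E F : ZMod (g * d) → ℤ,
      (∀ i, E i = 1 ∨ E i = -1) ∧ (∀ i, F i = 1 ∨ F i = -1) ∧
      ∀ s : ZMod (g * d), s ≠ 0 → paf (g * d) E s + paf (g * d) F s = 0 := by
  have hA' : ∀ i, (-A) i = 1 ∨ (-A) i = -1 := fun i => by rcases hA i with h | h <;> simp [h]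
  refine ⟨_, _, turynSeq_sign hA hB hC hD, turynSeq_sign hB hA' hC hD, fun s hs => ?_⟩
  have hGolay' := mapDomainRingHom_seqPoly_pair_identity (Int.castAddHom (ZMod (g * d)))
    (seqPoly_golay_identity hA hB hGolay)
  simp only [Int.coe_castAddHom, Int.cast_one] at hGolay'
  have hPeriodic' := mapDomainRingHom_seqPoly_pair_identity (zmodScaleHom g d)
    (seqPoly_halves_identity hC hD hPeriodic)
  rw [zmodScaleHom_one] at hPeriodic'
  have key := seqPoly_turynSeq_identity A B (fun j => (C j + D j) / 2) (fun j => (C j - D j) / 2)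
  rw [hGolay', hPeriodic', ← Nat.cast_mul] at key
  rw [paf_eq_coeff, paf_eq_coeff, ← Finsupp.add_apply, ← coeff_add, key, coeff_natCast,
    Finsupp.single_apply, if_neg (Ne.symm hs)]

theorem golay_mul_periodic_golay (g d : ℕ) (hg : 0 < g) (hd : 0 < d)
    (A B : ZMod g → ℤ) (C D : ZMod d → ℤ)
    (hA : ∀ i, A i = 1 ∨ A i = -1) (hB : ∀ i, B i = 1 ∨ B i = -1)
    (hC : ∀ i, C i = 1 ∨ C i = -1) (hD : ∀ i, D i = 1 ∨ D i = -1)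
    (hGolay : ∀ s : ℤ, s ≠ 0 → naf g A s + naf g B s = 0)
    (hPeriodic : ∀ s : ZMod d, s ≠ 0 → paf d C s + paf d D s = 0) :
    ∃ E F : ZMod (g * d) → ℤ,
      (∀ i, E i = 1 ∨ E i = -1) ∧ (∀ i, F i = 1 ∨ F i = -1) ∧
      ∀ s : ZMod (g * d), s ≠ 0 → paf (g * d) E s + paf (g * d) F s = 0 :=
  golay_mul_periodic_golay_general g d A B C D hA hB hC hD hGolay hPeriodic
end
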